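/- For the hypothesis class H'_{≤n} = {h_p : p prime, p ≤ n}, the VC-dimension equals ⌊log₂ π(n)⌋, where π(n) is the number of primes ≤ n. -/

import Mathlib

/-!
Shattering `C` needs a distinct prime for each of the `2 ^ #C` labellings of `C`, so
`2 ^ #C ≤ π(n)`. Conversely, if `2 ^ d ≤ π(n)`, label `2 ^ d` primes `q g` by the functions
`g : Fin d → Bool` and take the points `c i = ∏_{g i = false} (q g)²`: the prime `q g` divides
`c i` exactly when `g i = false`, and then `q g < (q g)² ≤ c i`, so `h_{q g}(c i) = g i`.
-/

/-- `hp p x` is the hypothesis `h_p` : it is `false` iff `p ∣ x` and `x > p`. -/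
def hp (p x : ℕ) : Bool := !(p ∣ x ∧ p < x : Bool)

/-- The class `H'_{≤ n} = {h_p : p prime, p ≤ n}` shatters the finite set `C ⊆ {2,3,…}`. -/
def ShattersPrimesLe (n : ℕ) (C : Finset ℕ) : Prop :=
  ∀ f : ℕ → Bool, ∃ p : ℕ, p.Prime ∧ p ≤ n ∧ ∀ c ∈ C, hp p c = f c

open Finset Function

lemma hp_eq_false_iff {p x : ℕ} : hp p x = false ↔ p ∣ x ∧ p < x := by
  simp [hp]

lemma hp_eq_true_of_not_dvd {p x : ℕ} (h : ¬p ∣ x) : hp p x = true := by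
  simp [hp, h]

lemma hp_eq_false_of_sq_dvd {p x : ℕ} (h2p : 2 ≤ p) (hx : 0 < x) (h : p ^ 2 ∣ x) :
    hp p x = false :=
  hp_eq_false_iff.2 ⟨(dvd_pow_self p two_ne_zero).trans h,
    (show p < p ^ 2 by nlinarith).trans_le (Nat.le_of_dvd hx h)⟩

lemma two_pow_card_le_primeCounting {n : ℕ} {C : Finset ℕ} (hs : ShattersPrimesLe n C) :
    2 ^ #C ≤ Nat.primeCounting n := by
  choose q hq_prime hq_le hq using fun T : Finset ℕ ↦ hs (· ∈ T)
  rw [← Nat.primesLE_card_eq_primeCounting, ← card_powerset]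
  refine card_le_card_of_injOn q (fun T _ ↦ Nat.mem_primesLE.2 ⟨hq_le T, hq_prime T⟩) ?_
  intro T hT T' hT' hTT'
  ext x
  by_cases hx : x ∈ C
  · exact decide_eq_decide.1 ((hq T x hx).symm.trans (hTT' ▸ hq T' x hx))
  · exact iff_of_false (fun h ↦ hx (mem_powerset.1 hT h)) (fun h ↦ hx (mem_powerset.1 hT' h))

lemma dvd_prod_sq_iff_mem {ι : Type*} {q : ι → ℕ} (hq : ∀ i, (q i).Prime) (hinj : Injective q)
    (s : Finset ι) (i : ι) : q i ∣ ∏ j ∈ s, q j ^ 2 ↔ i ∈ s := by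
  rw [(hq i).prime.dvd_finsetProd_iff]
  refine ⟨fun ⟨j, hj, hdvd⟩ ↦ ?_, fun hi ↦ ⟨i, hi, dvd_pow_self _ two_ne_zero⟩⟩
  rwa [hinj ((Nat.prime_dvd_prime_iff_eq (hq i) (hq j)).1 ((hq i).dvd_of_dvd_pow hdvd))]

section ShatteringPoint

variable {ι : Type*} [Fintype ι] [DecidableEq ι]

def shatteringPoint (q : (ι → Bool) → ℕ) (i : ι) : ℕ :=
  ∏ g with g i = false, q g ^ 2

lemma hp_shatteringPoint {q : (ι → Bool) → ℕ} (hq : ∀ g, (q g).Prime) (hinj : Injective q)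
    (g : ι → Bool) (i : ι) : hp (q g) (shatteringPoint q i) = g i := by
  cases hgi : g i
  · exact hp_eq_false_of_sq_dvd (hq g).two_le
      (prod_pos fun g' _ ↦ pow_pos (hq g').pos 2) (dvd_prod_of_mem _ ((mem_filter_univ _).2 hgi))
  · exact hp_eq_true_of_not_dvd <| by
      rw [shatteringPoint, dvd_prod_sq_iff_mem hq hinj]
      simp [hgi]

lemma shatteringPoint_injective {q : (ι → Bool) → ℕ} (hq : ∀ g, (q g).Prime)
    (hinj : Injective q) : Injective (shatteringPoint q) := by
  intro i j hij
  by_contra hne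
  have := hp_shatteringPoint hq hinj (· = i) j
  rw [← hij, hp_shatteringPoint hq hinj] at this
  simp [Ne.symm hne] at this

lemma two_le_shatteringPoint {q : (ι → Bool) → ℕ} (hq : ∀ g, (q g).Prime) (hinj : Injective q)
    (i : ι) : 2 ≤ shatteringPoint q i :=
  (hq fun _ ↦ false).two_le.trans
    (hp_eq_false_iff.1 (hp_shatteringPoint hq hinj _ i)).2.le

end ShatteringPoint

lemma exists_shattered_of_two_pow_le {n d : ℕ} (h : 2 ^ d ≤ Nat.primeCounting n) :
    ∃ C : Finset ℕ, #C = d ∧ (∀ x ∈ C, 2 ≤ x) ∧ ShattersPrimesLe n C := by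
  obtain ⟨e⟩ : Nonempty ((Fin d → Bool) ↪ Nat.primesLE n) :=
    Embedding.nonempty_of_card_le (by simpa using h)
  set q : (Fin d → Bool) → ℕ := fun g ↦ e g
  have hq g : (q g).Prime := Nat.prime_of_mem_primesLE (e g).2
  have hinj : Injective q := Subtype.val_injective.comp e.injective
  refine ⟨univ.image (shatteringPoint q), ?_, ?_, fun f ↦ ?_⟩
  · simp [card_image_of_injective _ (shatteringPoint_injective hq hinj)]
  · simpa using two_le_shatteringPoint hq hinj
  · refine ⟨q (f ∘ shatteringPoint q), hq _, Nat.le_of_mem_primesLE (e _).2, ?_⟩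
    simp [hp_shatteringPoint hq hinj]

/-- `VCdim(H'_{≤ n}) = ⌊log₂ π(n)⌋`: some set of `≥ 2`-integers of that size is shattered,
and no larger set is shattered. -/
theorem stmt5 (n : ℕ) (hn : 2 ≤ n) :
    (∃ C : Finset ℕ, C.card = Nat.log 2 (Nat.primeCounting n) ∧ (∀ x ∈ C, 2 ≤ x) ∧
        ShattersPrimesLe n C) ∧
      ∀ C : Finset ℕ, (∀ x ∈ C, 2 ≤ x) → ShattersPrimesLe n C →
        C.card ≤ Nat.log 2 (Nat.primeCounting n) := by
  have hπ : Nat.primeCounting n ≠ 0 := by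
    rw [← Nat.primesLE_card_eq_primeCounting]
    exact card_ne_zero_of_mem (Nat.mem_primesLE.2 ⟨hn, Nat.prime_two⟩)
  exact ⟨exists_shattered_of_two_pow_le (Nat.pow_log_le_self 2 hπ),
    fun C _ hs ↦ Nat.le_log_of_pow_le one_lt_two (two_pow_card_le_primeCounting hs)⟩
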